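/- Let g be an m×m unitary monomial matrix, i.e., g e_i = d_i e_{π(i)} for a permutation π of {0,…,m−1} and unit complex numbers d_i. Then for every positive integer n and all ν, ν' ∈ T(m,n), one has [B_n(g)]_{ν',ν} = ∏_i d_i^{ν(i)} if ν' = ν∘π^{−1}, and [B_n(g)]_{ν',ν} = 0 otherwise; equivalently, B_n(g) e_ν = (∏_i d_i^{ν(i)}) e_{ν∘π^{−1}}. In particular, B_n(g) is a unitary monomial matrix. -/

import Mathlib

namespace BSF

variable {α : Type*} [Fintype α] [DecidableEq α]

/-- The canonical list in which each index `i` is repeated `ν i` times. -/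
noncomputable def repList (ν : α → ℕ) : List α :=
  Finset.univ.toList.flatMap fun i => List.replicate (ν i) i

set_option linter.unusedSectionVars false in
lemma repList_length (ν : α → ℕ) : (repList ν).length = ∑ i, ν i := by
  simp [repList, List.length_flatMap]

/-- The index set `T(m,n)`: occupation-number tuples with total `n`. -/
def BosonIdx (α : Type*) [Fintype α] (n : ℕ) := {ν : α → ℕ // ∑ i, ν i = n}

instance {n : ℕ} : DecidableEq (BosonIdx α n) :=
  inferInstanceAs (DecidableEq {ν : α → ℕ // ∑ i, ν i = n})

noncomputable instance {n : ℕ} : Fintype (BosonIdx α n) :=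
  Fintype.ofInjective
    (fun ν : BosonIdx α n => fun i : α =>
      (⟨ν.1 i, by
        have h := Finset.single_le_sum (f := ν.1) (fun j _ => Nat.zero_le _) (Finset.mem_univ i)
        rw [ν.2] at h
        omega⟩ : Fin (n + 1)))
    (fun a b hab => Subtype.ext (funext fun i => congrArg Fin.val (congrFun hab i)))

/-- The permanent of a square complex matrix. -/
noncomputable def permanent {n : ℕ} (M : Matrix (Fin n) (Fin n) ℂ) : ℂ :=
  ∑ σ : Equiv.Perm (Fin n), ∏ i, M (σ i) i

/-- The canonical repetition function associated with an occupation tuple. -/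
noncomputable def repFun {n : ℕ} (ν : BosonIdx α n) : Fin n → α :=
  fun k => (repList ν.1).get (Fin.cast ((repList_length ν.1).trans ν.2).symm k)

/-- The `n`-boson representation of a matrix `S`. -/
noncomputable def bosonRep (n : ℕ) (S : Matrix α α ℂ) :
    Matrix (BosonIdx α n) (BosonIdx α n) ℂ :=
  Matrix.of fun ν ν' =>
    permanent (Matrix.of fun k l => S (repFun ν k) (repFun ν' l)) /
      (Real.sqrt ((∏ i, (ν.1 i).factorial * (ν'.1 i).factorial : ℕ) : ℝ) : ℂ)

/-- Relabeling an occupation tuple by (precomposition with) a permutation of the modes. -/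
def permIdx {n : ℕ} (σ : Equiv.Perm α) (ν : BosonIdx α n) : BosonIdx α n :=
  ⟨ν.1 ∘ σ, show ∑ i, ν.1 (σ i) = n from (Equiv.sum_comp σ ν.1).trans ν.2⟩

end BSF

/-! For a monomial `g` the matrix `g (f k) (r l)`, with `f, r` the repetition functions of `ν', ν`,
has the entry `d (r l)` where `f k = π (r l)` and `0` elsewhere. So every nonzero term of its
permanent equals `∏ l, d (r l) = ∏ i, d i ^ ν i`, and the permanent counts the permutations `σ`
with `f ∘ σ = π ∘ r`. These exist iff `f` and `π ∘ r` have fibres of equal sizes, i.e. iff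
`ν' = ν ∘ π⁻¹`, and then they form a coset of the stabiliser of `π ∘ r`, which has `∏ i, ν i !`
elements; this cancels the normalisation `√(∏ i, ν' i ! * ν i !)`. -/

open Equiv Finset Matrix

section PermFiber

variable {β α : Type*} [Fintype β] [DecidableEq α]

theorem Equiv.Perm.exists_comp_eq_iff_card_fiber_eq {f h : β → α} :
    (∃ σ : Perm β, f ∘ σ = h) ↔
      ∀ i, Fintype.card {k // f k = i} = Fintype.card {k // h k = i} := by
  constructor
  · rintro ⟨σ, rfl⟩ i
    exact (Fintype.card_congr (σ.subtypeEquiv fun _ => Iff.rfl)).symm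
  · intro hc
    let e i : {k // h k = i} ≃ {k // f k = i} := Fintype.equivOfCardEq (hc i).symm
    exact ⟨ofFiberEquiv e, funext (ofFiberEquiv_map e)⟩

theorem Equiv.Perm.card_comp_eq_eq_prod_factorial [DecidableEq β] [Fintype α] {f h : β → α}
    {σ₀ : Perm β} (hσ₀ : f ∘ σ₀ = h) :
    Fintype.card {σ : Perm β // f ∘ σ = h} = ∏ i, (Fintype.card {k // h k = i}).factorial := by
  subst hσ₀
  rw [← DomMulAct.stabilizer_card]
  refine Fintype.card_congr ((Equiv.mulLeft σ₀⁻¹).subtypeEquiv fun σ => ?_)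
  rw [coe_mulLeft, Perm.coe_mul, ← Function.comp_assoc, Function.comp_assoc f, ← Perm.coe_mul,
    mul_inv_cancel, Perm.coe_one, Function.comp_id]

theorem Fintype.prod_comp_eq_prod_pow_card_fiber [Fintype α] {M : Type*} [CommMonoid M]
    (c : α → M) (f : β → α) :
    ∏ k, c (f k) = ∏ i, c i ^ Fintype.card {k // f k = i} := by
  rw [← Finset.prod_fiberwise univ f]
  refine Finset.prod_congr rfl fun i _ => ?_
  rw [Fintype.card_subtype, ← Finset.prod_const]
  exact Finset.prod_congr rfl fun k hk => by rw [(Finset.mem_filter.mp hk).2]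

end PermFiber

theorem Matrix.permanent_of_ite_eq {β α R : Type*} [Fintype β] [DecidableEq β] [DecidableEq α]
    [CommSemiring R] (f h : β → α) (c : β → R) :
    (Matrix.of fun k l => if f k = h l then c l else 0).permanent =
      Fintype.card {σ : Perm β // f ∘ σ = h} • ∏ l, c l := by
  simp only [Matrix.permanent, Matrix.of_apply, Fintype.prod_ite_zero]
  rw [Finset.sum_ite, Finset.sum_const_zero, add_zero, Finset.sum_const, Fintype.card_subtype]
  simp only [funext_iff, Function.comp_apply]

section Monomial

variable {ι R : Type*} [Fintype ι] [DecidableEq ι] {M : Matrix ι ι R} {σ : Perm ι} {D : ι → R}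

theorem Matrix.mulVec_single_one_of_monomial [NonAssocSemiring R]
    (hM : ∀ i j, M j i = if j = σ i then D i else 0) (i : ι) :
    M *ᵥ Pi.single i 1 = D i • Pi.single (σ i) 1 := by
  ext j
  rw [mulVec_single_one, col_apply, hM, Pi.smul_apply, Pi.single_apply, smul_eq_mul, mul_ite,
    mul_one, mul_zero]

theorem Matrix.mem_unitaryGroup_of_monomial [CommRing R] [StarRing R]
    (hD : ∀ i, star (D i) * D i = 1) (hM : ∀ i j, M j i = if j = σ i then D i else 0) :
    M ∈ unitaryGroup ι R := by
  rw [mem_unitaryGroup_iff']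
  ext a b
  rw [mul_apply, one_apply, Finset.sum_eq_single (σ a)]
  · simp only [star_apply, hM, σ.injective.eq_iff, ↓reduceIte]
    split_ifs with h
    · rw [← h, hD]
    · rw [mul_zero]
  · intro k _ hk
    rw [star_apply, hM, if_neg hk, star_zero, zero_mul]
  · exact fun h => absurd (Finset.mem_univ _) h

end Monomial

namespace BSF

variable {α : Type*} [Fintype α] [DecidableEq α]

lemma count_repList (ν : α → ℕ) (i : α) : (repList ν).count i = ν i := by
  simp [repList, List.count_flatMap, List.count_replicate, Finset.sum_map_toList]

lemma card_fiber_repFun {n : ℕ} (ν : BosonIdx α n) (i : α) :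
    Fintype.card {k // repFun ν k = i} = ν.1 i := by
  rw [Fintype.card_subtype, ← count_repList ν.1 i]
  -- `repFun ν` is definitionally `List.Vector.get` of `repList ν.1`
  exact Fin.card_filter_univ_eq_vector_get_eq_count i ⟨repList ν.1, (repList_length _).trans ν.2⟩

lemma card_fiber_perm_comp_repFun {n : ℕ} (π : Perm α) (ν : BosonIdx α n) (i : α) :
    Fintype.card {k // π (repFun ν k) = i} = ν.1 (π.symm i) :=
  (Fintype.card_congr (subtypeEquivRight fun _ => π.eq_symm_apply.symm)).trans
    (card_fiber_repFun ν (π.symm i))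

lemma exists_perm_repFun_comp_eq_iff {n : ℕ} (π : Perm α) (ν ν' : BosonIdx α n) :
    (∃ σ : Perm (Fin n), repFun ν' ∘ σ = π ∘ repFun ν) ↔ ν' = permIdx π.symm ν := by
  simp only [Perm.exists_comp_eq_iff_card_fiber_eq, Function.comp_apply, card_fiber_repFun,
    card_fiber_perm_comp_repFun]
  exact ⟨fun h => Subtype.ext (funext h), fun h i => congrFun (congrArg Subtype.val h) i⟩

lemma card_perm_repFun_comp_eq {n : ℕ} (π : Perm α) (ν ν' : BosonIdx α n) :
    Fintype.card {σ : Perm (Fin n) // repFun ν' ∘ σ = π ∘ repFun ν} =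
      if ν' = permIdx π.symm ν then ∏ i, (ν.1 i).factorial else 0 := by
  split_ifs with h
  · obtain ⟨σ₀, hσ₀⟩ := (exists_perm_repFun_comp_eq_iff π ν ν').mpr h
    rw [Perm.card_comp_eq_eq_prod_factorial hσ₀]
    simp only [Function.comp_apply, card_fiber_perm_comp_repFun]
    exact Equiv.prod_comp π.symm fun i => (ν.1 i).factorial
  · rw [Fintype.card_eq_zero_iff, isEmpty_subtype]
    exact fun σ hσ => h ((exists_perm_repFun_comp_eq_iff π ν ν').mp ⟨σ, hσ⟩)

def permIdxEquiv {n : ℕ} (σ : Perm α) : Perm (BosonIdx α n) where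
  toFun := permIdx σ
  invFun := permIdx σ.symm
  left_inv ν := Subtype.ext (funext fun i => congrArg ν.1 (σ.apply_symm_apply i))
  right_inv ν := Subtype.ext (funext fun i => congrArg ν.1 (σ.symm_apply_apply i))

lemma bosonRep_apply_of_monomial {n : ℕ} {g : Matrix α α ℂ} {π : Perm α} {d : α → ℂ}
    (hg : ∀ i j, g j i = if j = π i then d i else 0) (ν ν' : BosonIdx α n) :
    bosonRep n g ν' ν = if ν' = permIdx π.symm ν then ∏ i, d i ^ ν.1 i else 0 := by
  have hperm : permanent (Matrix.of fun k l => g (repFun ν' k) (repFun ν l)) =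
      Fintype.card {σ : Perm (Fin n) // repFun ν' ∘ σ = π ∘ repFun ν} • ∏ i, d i ^ ν.1 i := by
    simp only [hg]
    -- `BSF.permanent` is definitionally `Matrix.permanent`
    refine (Matrix.permanent_of_ite_eq (repFun ν') (π ∘ repFun ν) _).trans ?_
    rw [Fintype.prod_comp_eq_prod_pow_card_fiber]
    simp only [card_fiber_repFun]
  rw [bosonRep, Matrix.of_apply, hperm, card_perm_repFun_comp_eq]
  split_ifs with h
  · subst h
    set N := ∏ i, (ν.1 i).factorial
    have hden : ∏ i, ((permIdx π.symm ν).1 i).factorial * (ν.1 i).factorial = N * N := by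
      rw [Finset.prod_mul_distrib]
      exact congrArg (· * N) (Equiv.prod_comp π.symm fun i => (ν.1 i).factorial)
    have hN : (N : ℂ) ≠ 0 := Nat.cast_ne_zero.mpr (by positivity)
    rw [hden, Nat.cast_mul, Real.sqrt_mul_self (Nat.cast_nonneg _), nsmul_eq_mul,
      Complex.ofReal_natCast, mul_div_cancel_left₀ _ hN]
  · rw [zero_smul, zero_div]

theorem bosonRep_of_monomial_general {m n : ℕ}
    (g : Matrix (Fin m) (Fin m) ℂ) (π : Equiv.Perm (Fin m)) (d : Fin m → ℂ)
    (hd : ∀ i, ‖d i‖ = 1)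
    (hg : ∀ i j, g j i = if j = π i then d i else 0) :
    (∀ ν ν' : BosonIdx (Fin m) n,
      bosonRep n g ν' ν = if ν' = permIdx π.symm ν then ∏ i, d i ^ ν.1 i else 0) ∧
    (∀ ν : BosonIdx (Fin m) n,
      (bosonRep n g).mulVec (Pi.single ν 1) =
        (∏ i, d i ^ ν.1 i) • (Pi.single (permIdx π.symm ν) (1 : ℂ) : BosonIdx (Fin m) n → ℂ)) ∧
    (bosonRep n g ∈ Matrix.unitaryGroup (BosonIdx (Fin m) n) ℂ ∧
      ∃ (Sig : Equiv.Perm (BosonIdx (Fin m) n)) (D : BosonIdx (Fin m) n → ℂ),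
        (∀ ν, ‖D ν‖ = 1) ∧
        ∀ ν ν' : BosonIdx (Fin m) n,
          bosonRep n g ν' ν = if ν' = Sig ν then D ν else 0) := by
  have hB : ∀ ν ν' : BosonIdx (Fin m) n, bosonRep n g ν' ν =
      if ν' = permIdxEquiv π.symm ν then ∏ i, d i ^ ν.1 i else 0 :=
    bosonRep_apply_of_monomial hg
  have hD : ∀ ν : BosonIdx (Fin m) n, ‖∏ i, d i ^ ν.1 i‖ = 1 := fun ν => by
    simp only [norm_prod, norm_pow, hd, one_pow, Finset.prod_const_one]
  refine ⟨hB, Matrix.mulVec_single_one_of_monomial hB, ?_, permIdxEquiv π.symm, _, hD, hB⟩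
  refine Matrix.mem_unitaryGroup_of_monomial (fun ν => ?_) hB
  rw [Complex.star_def, Complex.conj_mul', hD, Complex.ofReal_one, one_pow]

/-- The `n`-boson representation of a unitary monomial matrix
`g e_i = d_i e_{π i}` has entries `[B_n(g)]_{ν',ν} = ∏ i, d i ^ ν i` if `ν' = ν ∘ π⁻¹`
and `0` otherwise; equivalently `B_n(g) e_ν = (∏ i, d i ^ ν i) e_{ν ∘ π⁻¹}`.
In particular `B_n(g)` is again a unitary monomial matrix. -/
theorem bosonRep_of_monomial {m n : ℕ} (hn : 0 < n)
    (g : Matrix (Fin m) (Fin m) ℂ) (π : Equiv.Perm (Fin m)) (d : Fin m → ℂ)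
    (hd : ∀ i, ‖d i‖ = 1)
    (hg : ∀ i j, g j i = if j = π i then d i else 0) :
    (∀ ν ν' : BosonIdx (Fin m) n,
      bosonRep n g ν' ν = if ν' = permIdx π.symm ν then ∏ i, d i ^ ν.1 i else 0) ∧
    (∀ ν : BosonIdx (Fin m) n,
      (bosonRep n g).mulVec (Pi.single ν 1) =
        (∏ i, d i ^ ν.1 i) • (Pi.single (permIdx π.symm ν) (1 : ℂ) : BosonIdx (Fin m) n → ℂ)) ∧
    (bosonRep n g ∈ Matrix.unitaryGroup (BosonIdx (Fin m) n) ℂ ∧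
      ∃ (Sig : Equiv.Perm (BosonIdx (Fin m) n)) (D : BosonIdx (Fin m) n → ℂ),
        (∀ ν, ‖D ν‖ = 1) ∧
        ∀ ν ν' : BosonIdx (Fin m) n,
          bosonRep n g ν' ν = if ν' = Sig ν then D ν else 0) :=
  bosonRep_of_monomial_general g π d hd hg

end BSF
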